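/- Let A be a unital C*-algebra over ℂ and let Q ∈ A be quasinilpotent. Then for every λ ∈ ℂ, the sequence |(λ·1 + Q)^n|^{1/n} converges in norm to |λ|·1, i.e. ‖ |(λ·1+Q)^n|^{1/n} − |λ|·1 ‖ → 0 as n → ∞. In particular, Q has the shifted norm convergence property. -/

import Mathlib

/-!
If `σ(T) = {μ}`, the positive element `P = (Tⁿ)* Tⁿ` has spectrum in `[‖T⁻ⁿ‖⁻², ‖Tⁿ‖²]`
(the lower end only when `μ ≠ 0`, otherwise `0`), so the spectrum of `|Tⁿ|^{1/n} = P^{1/(2n)}`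
lies in `[‖T⁻ⁿ‖^{-1/n}, ‖Tⁿ‖^{1/n}]`. By Gelfand's formula both ends tend to `|μ|`, and a
self-adjoint element whose spectrum is within `ε` of `|μ|` is within `ε` of `|μ|·1` in norm.
For `T = λ·1 + Q` with `Q` quasinilpotent, `σ(T) = {λ}`.
-/

open Filter Topology

/-- The element `|T^n|^{1/n} = ((T^n)^* T^n)^{1/(2n)}`, defined via the continuous
functional calculus. -/
noncomputable def absPowRoot {A : Type*} [CStarAlgebra A] [PartialOrder A] [StarOrderedRing A]
    (T : A) (n : ℕ) : A :=
  CFC.rpow (star (T ^ n) * T ^ n) ((2 * n : ℝ))⁻¹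

lemma Real.sq_rpow_inv_two_mul {m : ℝ} (hm : 0 ≤ m) (n : ℕ) :
    (m ^ 2) ^ ((2 * n : ℝ))⁻¹ = m ^ (1 / n : ℝ) := by
  rw [← Real.rpow_natCast, ← Real.rpow_mul hm, mul_inv, ← mul_assoc, Nat.cast_two,
    mul_inv_cancel₀ two_ne_zero, one_mul, one_div]

theorem inv_norm_inv_le_norm_of_mem_spectrum {𝕜 A : Type*} [NormedField 𝕜] [NormedRing A]
    [NormedAlgebra 𝕜 A] [CompleteSpace A] [NormOneClass A] (u : Aˣ) {x : 𝕜}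
    (hx : x ∈ spectrum 𝕜 (u : A)) : ‖(↑u⁻¹ : A)‖⁻¹ ≤ ‖x‖ := by
  have hx0 : x ≠ 0 := fun h => Units.zero_notMem_spectrum 𝕜 u (h ▸ hx)
  have hinv : x⁻¹ ∈ spectrum 𝕜 (↑u⁻¹ : A) := by
    rw [← spectrum.map_inv]; simpa using hx
  have := spectrum.norm_le_norm_of_mem hinv
  rw [norm_inv] at this
  exact inv_le_of_inv_le₀ (norm_pos_iff.mpr hx0) this

section BanachAlgebra

variable {A : Type*} [NormedRing A] [NormedAlgebra ℂ A] [CompleteSpace A]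

theorem tendsto_norm_pow_rpow_of_spectrum_eq_singleton {a : A} {μ : ℂ}
    (h : spectrum ℂ a = {μ}) :
    Tendsto (fun n : ℕ => ‖a ^ n‖ ^ (1 / n : ℝ)) atTop (𝓝 ‖μ‖) := by
  have hρ : spectralRadius ℂ a = ENNReal.ofReal ‖μ‖ := by
    simp [spectralRadius, h, ofReal_norm, enorm]
  have hgelfand := spectrum.pow_norm_pow_one_div_tendsto_nhds_spectralRadius a
  rw [hρ] at hgelfand
  have hreal := (ENNReal.tendsto_toReal ENNReal.ofReal_ne_top).comp hgelfand
  rw [ENNReal.toReal_ofReal (norm_nonneg μ)] at hreal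
  refine hreal.congr fun n => ?_
  simp [ENNReal.toReal_ofReal, Real.rpow_nonneg]

theorem tendsto_inv_norm_inv_pow_rpow_of_spectrum_eq_singleton {u : Aˣ} {μ : ℂ}
    (h : spectrum ℂ (u : A) = {μ}) :
    Tendsto (fun n : ℕ => (‖(↑u⁻¹ : A) ^ n‖ ^ (1 / n : ℝ))⁻¹) atTop (𝓝 ‖μ‖) := by
  have hμ : μ ≠ 0 := fun hμ => Units.zero_notMem_spectrum ℂ u (by simp [h, hμ])
  have hinv : spectrum ℂ (↑u⁻¹ : A) = {μ⁻¹} := by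
    rw [← spectrum.map_inv, h, Set.inv_singleton]
  simpa using (tendsto_norm_pow_rpow_of_spectrum_eq_singleton hinv).inv₀ (by simpa using hμ)

end BanachAlgebra

section CStarAlgebra

variable {A : Type*} [CStarAlgebra A] [PartialOrder A] [StarOrderedRing A]

theorem norm_rpow_sub_smul_one_le {P : A} (hP : 0 ≤ P) {r : ℝ} (hr : 0 ≤ r) {lo c : ℝ}
    (hlo : 0 ≤ lo) (hlow : ∀ x ∈ spectrum ℝ P, lo ≤ x) :
    ‖P ^ r - c • (1 : A)‖ ≤ max |‖P‖ ^ r - c| |lo ^ r - c| := by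
  nontriviality A
  have hspec : ∀ x ∈ spectrum ℝ P, 0 ≤ x := fun x hx => spectrum_nonneg_of_nonneg hP hx
  have hcont : ContinuousOn (fun x : ℝ => x ^ r) (spectrum ℝ P) := fun x _ =>
    (Real.continuousAt_rpow_const x r (Or.inr hr)).continuousWithinAt
  have hrpow : P ^ r = cfc (fun x : ℝ => x ^ r) P := by
    rw [CFC.rpow_def, cfc_nnreal_eq_real _ _ hP]
    exact cfc_congr fun x hx => by rw [NNReal.coe_rpow, Real.coe_toNNReal x (hspec x hx)]
  have hconst : c • (1 : A) = cfc (fun _ : ℝ => c) P := by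
    rw [cfc_const c P, Algebra.algebraMap_eq_smul_one]
  rw [hrpow, hconst, ← cfc_sub _ _ P hcont continuousOn_const]
  refine norm_cfc_le (by positivity) fun x hx => ?_
  have hxP : x ≤ ‖P‖ := (Real.le_norm_self x).trans (spectrum.norm_le_norm_of_mem hx)
  have hupper := Real.rpow_le_rpow (hspec x hx) hxP hr
  have hlower := Real.rpow_le_rpow hlo (hlow x hx) hr
  rw [Real.norm_eq_abs, abs_le]
  constructor
  · linarith [neg_abs_le (lo ^ r - c), le_max_right |‖P‖ ^ r - c| |lo ^ r - c|]
  · linarith [le_abs_self (‖P‖ ^ r - c), le_max_left |‖P‖ ^ r - c| |lo ^ r - c|]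

theorem inv_norm_inv_sq_le_of_mem_spectrum_star_mul_self (u : Aˣ) {x : ℝ}
    (hx : x ∈ spectrum ℝ (star (u : A) * u)) : (‖(↑u⁻¹ : A)‖ ^ 2)⁻¹ ≤ x := by
  have : Nontrivial A := (subsingleton_or_nontrivial A).resolve_left fun _ => by
    simp [spectrum.of_subsingleton] at hx
  have hnorm : ‖(↑(star u * u)⁻¹ : A)‖ = ‖(↑u⁻¹ : A)‖ ^ 2 := by
    rw [mul_inv_rev, Units.val_mul, Units.coe_star_inv, CStarRing.norm_self_mul_star, sq]
  have hx' : x ∈ spectrum ℝ (↑(star u * u) : A) := by simpa using hx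
  have := inv_norm_inv_le_norm_of_mem_spectrum _ hx'
  rwa [hnorm, Real.norm_of_nonneg (spectrum_nonneg_of_nonneg (star_mul_self_nonneg _) hx)] at this

theorem tendsto_norm_absPowRoot_sub_smul_one {T : A} {c : ℝ} {lo : ℕ → ℝ}
    (hlo : ∀ n, 0 ≤ lo n) (hlow : ∀ n, ∀ x ∈ spectrum ℝ (star (T ^ n) * T ^ n), lo n ≤ x)
    (hupper : Tendsto (fun n : ℕ => ‖T ^ n‖ ^ (1 / n : ℝ)) atTop (𝓝 c))
    (hlower : Tendsto (fun n : ℕ => lo n ^ ((2 * n : ℝ))⁻¹) atTop (𝓝 c)) :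
    Tendsto (fun n => ‖absPowRoot T n - c • (1 : A)‖) atTop (𝓝 0) := by
  have hbound := ((hupper.sub_const c).abs.max (hlower.sub_const c).abs)
  rw [sub_self, abs_zero, max_self] at hbound
  refine squeeze_zero (fun _ => norm_nonneg _) (fun n => ?_) hbound
  have := norm_rpow_sub_smul_one_le (star_mul_self_nonneg (T ^ n)) (r := ((2 * n : ℝ))⁻¹)
    (by positivity) (hlo n) (hlow n) (c := c)
  rwa [CStarRing.norm_star_mul_self, ← sq, Real.sq_rpow_inv_two_mul (norm_nonneg _)] at this

theorem tendsto_norm_absPowRoot_sub_smul_one_of_spectrum_eq_singleton {T : A} {μ : ℂ}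
    (h : spectrum ℂ T = {μ}) :
    Tendsto (fun n => ‖absPowRoot T n - ‖μ‖ • (1 : A)‖) atTop (𝓝 0) := by
  have hupper := tendsto_norm_pow_rpow_of_spectrum_eq_singleton h
  by_cases hμ : μ = 0
  · refine tendsto_norm_absPowRoot_sub_smul_one (lo := 0) (fun _ => le_rfl)
      (fun n x hx => spectrum_nonneg_of_nonneg (star_mul_self_nonneg _) hx) hupper ?_
    rw [hμ, norm_zero]
    -- only eventually: at `n = 0` the exponent is `0` and `0 ^ 0 = 1`
    refine tendsto_const_nhds.congr' ?_
    filter_upwards [eventually_ge_atTop 1] with n hn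
    rw [Pi.zero_apply, Real.zero_rpow (by positivity)]
  · obtain ⟨u, rfl⟩ : IsUnit T :=
      spectrum.isUnit_of_zero_notMem ℂ (by simpa [h, eq_comm] using hμ)
    refine tendsto_norm_absPowRoot_sub_smul_one (lo := fun n => (‖(↑u⁻¹ : A) ^ n‖ ^ 2)⁻¹)
      (fun _ => by positivity) (fun n x hx => ?_) hupper ?_
    · rw [← Units.val_pow_eq_pow_val, inv_pow u n]
      exact inv_norm_inv_sq_le_of_mem_spectrum_star_mul_self (u ^ n) (by simpa using hx)
    · refine (tendsto_inv_norm_inv_pow_rpow_of_spectrum_eq_singleton h).congr fun n => ?_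
      rw [Real.inv_rpow (by positivity), Real.sq_rpow_inv_two_mul (norm_nonneg _)]

end CStarAlgebra

/-- If `Q` is a quasinilpotent element of a unital C*-algebra `A`, then for every
`λ ∈ ℂ` the sequence `|(λ·1 + Q)^n|^{1/n}` converges in norm to `|λ|·1`; in particular, `Q` has
the shifted norm convergence property (`|(Q - λ·1)^n|^{1/n}` converges in norm for every `λ`). -/
theorem quasinilpotent_shifted_norm_convergence
    {A : Type*} [CStarAlgebra A] [PartialOrder A] [StarOrderedRing A]
    (Q : A) (hQ : spectrum ℂ Q = {0}) :
    (∀ lam : ℂ, Tendsto (fun n : ℕ => ‖absPowRoot (lam • (1 : A) + Q) n - ‖lam‖ • (1 : A)‖)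
      atTop (𝓝 0)) ∧
    (∀ lam : ℂ, ∃ L : A, Tendsto (fun n : ℕ => absPowRoot (Q - lam • (1 : A)) n)
      atTop (𝓝 L)) := by
  have hshift (lam : ℂ) : spectrum ℂ (lam • (1 : A) + Q) = {lam} := by
    rw [← Algebra.algebraMap_eq_smul_one, ← spectrum.singleton_add_eq, hQ,
      Set.singleton_add_singleton, add_zero]
  have hconv (lam : ℂ) :=
    tendsto_norm_absPowRoot_sub_smul_one_of_spectrum_eq_singleton (hshift lam)
  refine ⟨hconv, fun lam => ⟨‖lam‖ • 1, ?_⟩⟩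
  rw [tendsto_iff_norm_sub_tendsto_zero]
  simpa [neg_smul, neg_add_eq_sub] using hconv (-lam)
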